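/- Let U ⊆ ℝ² be open and connected, h : U → ℝ smooth, positive, and harmonic. If the conformal metric h(du² + dv²) has constant positive Gaussian curvature K₀ > 0 (K = |∇h|²/(2h³) = K₀), then no such h exists; i.e., the round sphere metric admits no conformal parametrization with harmonic conformal factor. -/

import Mathlib

noncomputable def pdu (f : ℝ × ℝ → ℝ) : ℝ × ℝ → ℝ := fun p => fderiv ℝ f p (1, 0)
noncomputable def pdv (f : ℝ × ℝ → ℝ) : ℝ × ℝ → ℝ := fun p => fderiv ℝ f p (0, 1)

noncomputable def pd (v : ℝ × ℝ) (f : ℝ × ℝ → ℝ) : ℝ × ℝ → ℝ := fun p => fderiv ℝ f p v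

section Infra

variable {U : Set (ℝ × ℝ)} {f g : ℝ × ℝ → ℝ} {z v w : ℝ × ℝ} {c : ℝ}

lemma pd_congr (hU : IsOpen U) (hz : z ∈ U) (hfg : ∀ x ∈ U, f x = g x) :
    pd v f z = pd v g z := by
  have h : f =ᶠ[nhds z] g := Filter.eventually_of_mem (hU.mem_nhds hz) hfg
  simp only [pd, h.fderiv_eq]

lemma pd_add (hf : DifferentiableAt ℝ f z) (hg : DifferentiableAt ℝ g z) :
    pd v (fun x => f x + g x) z = pd v f z + pd v g z := by
  simp only [pd, fderiv_fun_add hf hg, ContinuousLinearMap.add_apply]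

lemma pd_mul (hf : DifferentiableAt ℝ f z) (hg : DifferentiableAt ℝ g z) :
    pd v (fun x => f x * g x) z = f z * pd v g z + g z * pd v f z := by
  simp only [pd, fderiv_fun_mul hf hg, ContinuousLinearMap.add_apply,
    ContinuousLinearMap.smul_apply, smul_eq_mul]

lemma pd_const_mul (hf : DifferentiableAt ℝ f z) (c : ℝ) :
    pd v (fun x => c * f x) z = c * pd v f z := by
  simp only [pd, fderiv_const_mul hf c, ContinuousLinearMap.smul_apply, smul_eq_mul]

lemma pd_smooth (hU : IsOpen U) (hf : ContDiffOn ℝ (⊤ : ℕ∞) f U) :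
    ContDiffOn ℝ (⊤ : ℕ∞) (pd v f) U := by
  have h1 : ContDiffOn ℝ (⊤ : ℕ∞) (fun x => fderiv ℝ f x) U := hf.fderiv_of_isOpen hU (by simp)
  exact (ContinuousLinearMap.apply ℝ ℝ v).contDiff.comp_contDiffOn h1

lemma diffAt (hU : IsOpen U) (hf : ContDiffOn ℝ (⊤ : ℕ∞) f U) (hz : z ∈ U) :
    DifferentiableAt ℝ f z :=
  (hf.contDiffAt (hU.mem_nhds hz)).differentiableAt (by simp)

lemma pd_pd (hf' : DifferentiableAt ℝ (fderiv ℝ f) z) :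
    pd v (pd w f) z = fderiv ℝ (fderiv ℝ f) z v w := by
  have h : pd w f = fun x => (fderiv ℝ f x) ((fun _ : ℝ × ℝ => w) x) := rfl
  rw [pd, h, fderiv_clm_apply hf' (differentiableAt_const w)]
  simp

lemma pd_comm (hU : IsOpen U) (hf : ContDiffOn ℝ (⊤ : ℕ∞) f U) (hz : z ∈ U) :
    pd v (pd w f) z = pd w (pd v f) z := by
  have hfa : ContDiffAt ℝ (⊤ : ℕ∞) f z := hf.contDiffAt (hU.mem_nhds hz)
  have hd : DifferentiableAt ℝ (fderiv ℝ f) z :=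
    (hfa.fderiv_right (m := 1) ((WithTop.coe_le_coe.mpr le_top))).differentiableAt one_ne_zero
  have hsymm := (hfa.of_le (WithTop.coe_le_coe.mpr le_top) : ContDiffAt ℝ 2 f z).isSymmSndFDerivAt (by simp)
  rw [pd_pd hd, pd_pd hd, hsymm v w]

end Infra

set_option maxHeartbeats 1000000 in
theorem stmt_18 (U : Set (ℝ × ℝ)) (hU : IsOpen U) (hUc : IsConnected U)
    (h : ℝ × ℝ → ℝ) (hsm : ContDiffOn ℝ (⊤ : ℕ∞) h U) (hpos : ∀ p ∈ U, 0 < h p)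
    (hharm : ∀ p ∈ U, pdu (pdu h) p + pdv (pdv h) p = 0)
    (K₀ : ℝ) (hK₀ : 0 < K₀)
    (hK : ∀ p ∈ U, ((pdu h p)^2 + (pdv h p)^2) / (2 * (h p)^3) = K₀) :
    False := by
  classical
  obtain ⟨z₀, hz₀⟩ := hUc.nonempty
  -- abbreviations
  set e1 : ℝ × ℝ := (1, 0) with he1
  set e2 : ℝ × ℝ := (0, 1) with he2
  have hpdu : ∀ f : ℝ × ℝ → ℝ, pdu f = pd e1 f := fun _ => rfl
  have hpdv : ∀ f : ℝ × ℝ → ℝ, pdv f = pd e2 f := fun _ => rfl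
  simp only [hpdu, hpdv] at hharm hK
  -- smoothness and differentiability of iterated derivatives
  have Sh : ContDiffOn ℝ (⊤ : ℕ∞) h U := hsm
  have S1 : ∀ v, ContDiffOn ℝ (⊤ : ℕ∞) (pd v h) U := fun v => pd_smooth hU Sh
  have S2 : ∀ v w, ContDiffOn ℝ (⊤ : ℕ∞) (pd w (pd v h)) U := fun v w => pd_smooth hU (S1 v)
  have dh : ∀ z ∈ U, DifferentiableAt ℝ h z := fun z hz => diffAt hU Sh hz
  have d1 : ∀ v, ∀ z ∈ U, DifferentiableAt ℝ (pd v h) z := fun v z hz => diffAt hU (S1 v) hz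
  have d2 : ∀ v w, ∀ z ∈ U, DifferentiableAt ℝ (pd w (pd v h)) z :=
    fun v w z hz => diffAt hU (S2 v w) hz
  -- the basic identity |∇h|² = 2K₀ h³ on U
  have I0 : ∀ z ∈ U, pd e1 h z * pd e1 h z + pd e2 h z * pd e2 h z
      = 2 * K₀ * (h z * (h z * h z)) := by
    intro z hz
    have h0 : 0 < h z := hpos z hz
    have hz3 : (2 : ℝ) * (h z) ^ 3 ≠ 0 := (mul_pos two_pos (pow_pos h0 3)).ne'
    have := hK z hz
    field_simp at this
    nlinarith [this]
  -- mixed partials commute (on U), as a function identity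
  have Isym : ∀ z ∈ U, pd e1 (pd e2 h) z = pd e2 (pd e1 h) z :=
    fun z hz => pd_comm hU Sh hz
  -- first derivative of I0 in direction v
  have D1 : ∀ v : ℝ × ℝ, ∀ z ∈ U,
      pd e1 h z * pd v (pd e1 h) z + pd e2 h z * pd v (pd e2 h) z
        = 3 * K₀ * ((h z * h z) * pd v h z) := by
    intro v z hz
    have c1 : pd v (fun x => pd e1 h x * pd e1 h x + pd e2 h x * pd e2 h x) z
        = pd v (fun x => 2 * K₀ * (h x * (h x * h x))) z := pd_congr hU hz I0
    have c2 : pd v (fun x => pd e1 h x * pd e1 h x + pd e2 h x * pd e2 h x) z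
        = (pd e1 h z * pd v (pd e1 h) z + pd e1 h z * pd v (pd e1 h) z)
          + (pd e2 h z * pd v (pd e2 h) z + pd e2 h z * pd v (pd e2 h) z) := by
      rw [pd_add ((d1 e1 z hz).fun_mul (d1 e1 z hz)) ((d1 e2 z hz).fun_mul (d1 e2 z hz)),
        pd_mul (d1 e1 z hz) (d1 e1 z hz), pd_mul (d1 e2 z hz) (d1 e2 z hz)]
    have c3 : pd v (fun x => 2 * K₀ * (h x * (h x * h x))) z
        = 2 * K₀ * (h z * (h z * pd v h z + h z * pd v h z) + (h z * h z) * pd v h z) := by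
      rw [pd_const_mul ((dh z hz).fun_mul ((dh z hz).fun_mul (dh z hz))),
        pd_mul (dh z hz) ((dh z hz).fun_mul (dh z hz)), pd_mul (dh z hz) (dh z hz)]
    linear_combination (1/2) * c1 - (1/2) * c2 + (1/2) * c3
  -- second derivative of I0: differentiate D1 v in direction v
  have D2 : ∀ v : ℝ × ℝ, ∀ z ∈ U,
      pd v (pd e1 h) z * pd v (pd e1 h) z + pd e1 h z * pd v (pd v (pd e1 h)) z
        + (pd v (pd e2 h) z * pd v (pd e2 h) z + pd e2 h z * pd v (pd v (pd e2 h)) z)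
      = 3 * K₀ * ((h z * h z) * pd v (pd v h) z
          + pd v h z * (h z * pd v h z + h z * pd v h z)) := by
    intro v z hz
    have c1 : pd v (fun x => pd e1 h x * pd v (pd e1 h) x + pd e2 h x * pd v (pd e2 h) x) z
        = pd v (fun x => 3 * K₀ * ((h x * h x) * pd v h x)) z :=
      pd_congr hU hz (D1 v)
    have c2 : pd v (fun x => pd e1 h x * pd v (pd e1 h) x + pd e2 h x * pd v (pd e2 h) x) z
        = (pd e1 h z * pd v (pd v (pd e1 h)) z + pd v (pd e1 h) z * pd v (pd e1 h) z)
          + (pd e2 h z * pd v (pd v (pd e2 h)) z + pd v (pd e2 h) z * pd v (pd e2 h) z) := by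
      rw [pd_add ((d1 e1 z hz).fun_mul (d2 e1 v z hz)) ((d1 e2 z hz).fun_mul (d2 e2 v z hz)),
        pd_mul (d1 e1 z hz) (d2 e1 v z hz), pd_mul (d1 e2 z hz) (d2 e2 v z hz)]
    have c3 : pd v (fun x => 3 * K₀ * ((h x * h x) * pd v h x)) z
        = 3 * K₀ * ((h z * h z) * pd v (pd v h) z
            + pd v h z * (h z * pd v h z + h z * pd v h z)) := by
      rw [pd_const_mul (((dh z hz).fun_mul (dh z hz)).fun_mul (d1 v z hz)),
        pd_mul ((dh z hz).fun_mul (dh z hz)) (d1 v z hz), pd_mul (dh z hz) (dh z hz)]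
    linear_combination c2.symm.trans (c1.trans c3)
  -- Laplacians of the first partials vanish
  have dharm : ∀ v : ℝ × ℝ, ∀ z ∈ U,
      pd v (pd e1 (pd e1 h)) z + pd v (pd e2 (pd e2 h)) z = 0 := by
    intro v z hz
    have c1 : pd v (fun x => pd e1 (pd e1 h) x + pd e2 (pd e2 h) x) z
        = pd v (fun _ => (0 : ℝ)) z := pd_congr hU hz hharm
    have c2 : pd v (fun x => pd e1 (pd e1 h) x + pd e2 (pd e2 h) x) z
        = pd v (pd e1 (pd e1 h)) z + pd v (pd e2 (pd e2 h)) z :=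
      pd_add (d2 e1 e1 z hz) (d2 e2 e2 z hz)
    have c3 : pd v (fun _ => (0 : ℝ)) z = 0 := by
      simp [pd]
    linear_combination c2.symm.trans (c1.trans c3)
  have lapP : ∀ z ∈ U, pd e1 (pd e1 (pd e1 h)) z + pd e2 (pd e2 (pd e1 h)) z = 0 := by
    intro z hz
    have h1 := dharm e1 z hz
    have h2 : pd e1 (pd e2 (pd e2 h)) z = pd e2 (pd e1 (pd e2 h)) z :=
      pd_comm hU (S1 e2) hz
    have h3 : pd e2 (pd e1 (pd e2 h)) z = pd e2 (pd e2 (pd e1 h)) z :=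
      pd_congr hU hz Isym
    linarith
  have lapQ : ∀ z ∈ U, pd e1 (pd e1 (pd e2 h)) z + pd e2 (pd e2 (pd e2 h)) z = 0 := by
    intro z hz
    have h1 := dharm e2 z hz
    have h2 : pd e2 (pd e1 (pd e1 h)) z = pd e1 (pd e2 (pd e1 h)) z :=
      (pd_comm hU (S1 e1) hz).symm
    have h3 : ∀ x ∈ U, pd e2 (pd e1 h) x = pd e1 (pd e2 h) x := fun x hx => (Isym x hx).symm
    have h4 : pd e1 (pd e2 (pd e1 h)) z = pd e1 (pd e1 (pd e2 h)) z :=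
      pd_congr hU hz h3
    linarith
  -- now work at the single point z₀
  set A := h z₀ with hA
  set P := pd e1 h z₀ with hP
  set Q := pd e2 h z₀ with hQ
  set Pu := pd e1 (pd e1 h) z₀ with hPu
  set Pv := pd e2 (pd e1 h) z₀ with hPv
  set Qu := pd e1 (pd e2 h) z₀ with hQu
  set Qv := pd e2 (pd e2 h) z₀ with hQv
  set Puu := pd e1 (pd e1 (pd e1 h)) z₀ with hPuu
  set Pvv := pd e2 (pd e2 (pd e1 h)) z₀ with hPvv
  set Quu := pd e1 (pd e1 (pd e2 h)) z₀ with hQuu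
  set Qvv := pd e2 (pd e2 (pd e2 h)) z₀ with hQvv
  have hApos : 0 < A := hpos z₀ hz₀
  have f0 : P * P + Q * Q = 2 * K₀ * (A * (A * A)) := I0 z₀ hz₀
  have f1 : Pu + Qv = 0 := hharm z₀ hz₀
  have f2 : Qu = Pv := Isym z₀ hz₀
  have f3 : P * Pu + Q * Qu = 3 * K₀ * ((A * A) * P) := D1 e1 z₀ hz₀
  have f4 : P * Pv + Q * Qv = 3 * K₀ * ((A * A) * Q) := D1 e2 z₀ hz₀
  have f5 : Pu * Pu + P * Puu + (Qu * Qu + Q * Quu)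
      = 3 * K₀ * ((A * A) * Pu + P * (A * P + A * P)) := D2 e1 z₀ hz₀
  have f6 : Pv * Pv + P * Pvv + (Qv * Qv + Q * Qvv)
      = 3 * K₀ * ((A * A) * Qv + Q * (A * Q + A * Q)) := D2 e2 z₀ hz₀
  have f7 : Puu + Pvv = 0 := lapP z₀ hz₀
  have f8 : Quu + Qvv = 0 := lapQ z₀ hz₀
  -- algebra: combine
  have s1 : Pu * Pu + Qu * Qu + Pv * Pv + Qv * Qv = 12 * K₀ ^ 2 * A ^ 4 := by
    linear_combination f5 + f6 - P * f7 - Q * f8 + 3 * K₀ * (A * A) * f1 + 6 * K₀ * A * f0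
  have s2 : Pv * Pv = Qu * Qu := by linear_combination (-(Qu + Pv)) * f2
  have s3 : Qv * Qv = Pu * Pu := by linear_combination (Qv - Pu) * f1
  have key1 : Pu * Pu + Qu * Qu = 6 * K₀ ^ 2 * A ^ 4 := by linarith
  have f4' : P * Qu - Q * Pu = 3 * K₀ * ((A * A) * Q) := by
    linear_combination f4 + P * f2 - Q * f1
  have key2 : (P * P + Q * Q) * (Pu * Pu + Qu * Qu)
      = 9 * K₀ ^ 2 * A ^ 4 * (P * P + Q * Q) := by
    linear_combination (P * Pu + Q * Qu + 3 * K₀ * ((A * A) * P)) * f3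
      + (P * Qu - Q * Pu + 3 * K₀ * ((A * A) * Q)) * f4'
  have hPQ : P * P + Q * Q = 2 * K₀ * A ^ 3 := by linear_combination f0
  rw [hPQ, key1] at key2
  have hpos7 : 0 < K₀ ^ 3 * A ^ 7 := by positivity
  nlinarith [key2, hpos7]
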